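/- Let H(x,p) = sup_{v∈F(x)}⟨−v,p⟩, assume H(·,p) is semiconvex with constant c₂|p| on a ball containing the relevant trajectories, and let (x̄, p̄) and x_h solve −ẋ(s) = ∇_pH(x(s), p̄(s)) on [0,t] with x̄(t) and x̄(t)+h as respective terminal conditions, where ṗ̄(s) ∈ ∂ₓ⁻H(x̄(s), p̄(s)) a.e. Then ⟨p̄(0), x_h(0) − x̄(0)⟩ − ⟨p̄(t), h⟩ ≥ c₂ ∫₀ᵗ |p̄(s)| |x_h(s) − x̄(s)|² ds. -/

import Mathlib

/-! With `w = x_h - x̄`, the function `s ↦ ⟪p̄ s, w s⟫ - ∫₀ˢ ⟪ṗ̄, w⟫` is differentiable at every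
interior point with derivative `⟪p̄, ẇ⟫ = H(x̄, p̄) - H(x_h, p̄)`, although `p̄` itself is only
absolutely continuous; the last equality is Euler's identity for the positively homogeneous
`H(x, ·)`. Semiconvexity bounds `⟪ṗ̄, w⟫ + H(x̄, p̄) - H(x_h, p̄)` by `-c₂ ‖p̄‖ ‖w‖²` almost
everywhere, and integrating this bound on the derivative gives the estimate. -/

open scoped RealInnerProductSpace
open Set MeasureTheory

variable {n : ℕ}

/-- The Hamiltonian `H(x,p) = sup_{v ∈ F x} ⟨-v, p⟩` of a differential inclusion. -/
noncomputable def ham (F : EuclideanSpace ℝ (Fin n) → Set (EuclideanSpace ℝ (Fin n)))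
    (x p : EuclideanSpace ℝ (Fin n)) : ℝ :=
  sSup ((fun v => ⟪-v, p⟫) '' F x)

/-- The Fréchet subdifferential of `f` at `x`. -/
def frechetSubdiff (f : EuclideanSpace ℝ (Fin n) → ℝ) (x : EuclideanSpace ℝ (Fin n)) :
    Set (EuclideanSpace ℝ (Fin n)) :=
  {p | ∀ ε > (0 : ℝ), ∃ δ > (0 : ℝ), ∀ y, ‖y - x‖ < δ →
    f y - f x - ⟪p, y - x⟫ ≥ -(ε * ‖y - x‖)}

open Filter Topology Asymptotics
open scoped Pointwise

section Calculus

variable {E : Type*} [NormedAddCommGroup E] [InnerProductSpace ℝ E]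

theorem HasFDerivAt.apply_self_of_pos_homogeneous {F : Type*} [NormedAddCommGroup F]
    [NormedSpace ℝ F] {f : F → ℝ} {f' : F →L[ℝ] ℝ} {x : F}
    (hf : ∀ r : ℝ, 0 < r → f (r • x) = r * f x) (h : HasFDerivAt f f' x) : f' x = f x := by
  have hchain : HasDerivAt (fun r : ℝ => f (r • x)) (f' x) 1 := by
    have h1 : HasFDerivAt f f' ((1 : ℝ) • x) := by rwa [one_smul]
    exact h1.comp_hasDerivAt (1 : ℝ) (by simpa using (hasDerivAt_id (1 : ℝ)).smul_const x)
  have hlin : HasDerivAt (fun r : ℝ => f (r • x)) (f x) 1 := by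
    refine (hasDerivAt_mul_const (f x)).congr_of_eventuallyEq ?_
    filter_upwards [eventually_gt_nhds one_pos] with r hr using hf r hr
  exact hchain.unique hlin

theorem sub_le_integral_of_hasDerivAt_of_ae_le {g g' φ : ℝ → ℝ} {a b : ℝ} (hab : a ≤ b)
    (hcont : ContinuousOn g (Icc a b)) (hderiv : ∀ x ∈ Ioo a b, HasDerivAt g (g' x) x)
    (hφ : IntegrableOn φ (Icc a b)) (hle : ∀ᵐ x, x ∈ Ioo a b → g' x ≤ φ x) :
    g b - g a ≤ ∫ x in a..b, φ x := by
  -- `max g' φ` dominates `g'` everywhere and agrees with `φ` almost everywhere.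
  have hae : (fun x => max (g' x) (φ x)) =ᵐ[volume.restrict (Icc a b)] φ := by
    rw [← Measure.restrict_congr_set Ioo_ae_eq_Icc]
    filter_upwards [(ae_restrict_iff' measurableSet_Ioo).2 hle] with x hx using max_eq_right hx
  calc g b - g a ≤ ∫ x in a..b, max (g' x) (φ x) :=
        intervalIntegral.sub_le_integral_of_hasDeriv_right_of_le hab hcont
          (fun x hx => (hderiv x hx).hasDerivWithinAt) (hφ.congr_fun_ae hae.symm)
          fun x _ => le_max_left _ _
    _ = ∫ x in a..b, φ x := by
        simp only [intervalIntegral.integral_of_le hab, ← integral_Icc_eq_integral_Ioc]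
        exact integral_congr_ae hae

theorem IntegrableOn.inner_continuousOn {f w : ℝ → E} {K : Set ℝ} (hf : IntegrableOn f K)
    (hw : ContinuousOn w K) (hK : IsCompact K) : IntegrableOn (fun u => ⟪f u, w u⟫) K := by
  obtain ⟨C, hC⟩ := hK.exists_bound_of_continuousOn hw
  refine Integrable.mono' (hf.norm.mul_const C)
    (hf.aestronglyMeasurable.inner (hw.aestronglyMeasurable hK.measurableSet)) ?_
  filter_upwards [ae_restrict_mem hK.measurableSet] with u hu
  exact (norm_inner_le_norm _ _).trans (mul_le_mul_of_nonneg_left (hC u hu) (norm_nonneg _))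

section Primitive

variable {p f : ℝ → E} {a b : ℝ}

theorem continuousOn_of_eq_add_integral (hf : IntervalIntegrable f volume a b)
    (hp : ∀ s ∈ Icc a b, p s = p a + ∫ u in a..s, f u) : ContinuousOn p (Icc a b) :=
  (continuousOn_const.add ((intervalIntegral.continuousOn_primitive_interval' hf
    left_mem_uIcc).mono Icc_subset_uIcc)).congr hp

theorem sub_eq_integral_of_eq_add_integral (hf : IntervalIntegrable f volume a b)
    (hp : ∀ s ∈ Icc a b, p s = p a + ∫ u in a..s, f u) {s₁ s₂ : ℝ} (h₁ : s₁ ∈ Icc a b)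
    (h₂ : s₂ ∈ Icc a b) : p s₂ - p s₁ = ∫ u in s₁..s₂, f u := by
  have hmem : ∀ s ∈ Icc a b, IntervalIntegrable f volume a s := fun s hs =>
    hf.mono_set (uIcc_subset_uIcc_left (Icc_subset_uIcc hs))
  rw [hp s₂ h₂, hp s₁ h₁, add_sub_add_left_eq_sub,
    intervalIntegral.integral_interval_sub_left (hmem s₂ h₂) (hmem s₁ h₁)]

theorem isLittleO_integral_inner_of_isBigO {g : ℝ → E} {s₀ : ℝ}
    (hf : IntervalIntegrable f volume a b) (hs₀ : s₀ ∈ Ioo a b)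
    (hg : g =O[𝓝 s₀] (· - s₀)) :
    (fun s => ∫ u in s₀..s, ⟪f u, g u⟫) =o[𝓝 s₀] (· - s₀) := by
  obtain ⟨K, hK, hgK⟩ := hg.exists_nonneg
  obtain ⟨δ, hδ, hgδ⟩ := Metric.eventually_nhds_iff.1 hgK.bound
  have hIcc : Icc a b ∈ 𝓝 s₀ := Icc_mem_nhds hs₀.1 hs₀.2
  have hmem : s₀ ∈ uIcc a b := Icc_subset_uIcc (Ioo_subset_Icc_self hs₀)
  have hρ : Tendsto (fun s => ∫ u in s₀..s, ‖f u‖) (𝓝 s₀) (𝓝 0) := by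
    have := ((intervalIntegral.continuousOn_primitive_interval' hf.norm hmem).continuousAt
      (mem_of_superset hIcc Icc_subset_uIcc)).tendsto
    rwa [intervalIntegral.integral_same] at this
  -- On `[s₀, s]` the integrand is at most `K ‖f u‖ |s - s₀|`, and `∫ ‖f‖ → 0`.
  have hbound : (fun s => ∫ u in s₀..s, ⟪f u, g u⟫)
      =O[𝓝 s₀] fun s => (∫ u in s₀..s, ‖f u‖) * (s - s₀) := by
    refine IsBigO.of_bound K ?_
    filter_upwards [hIcc, Metric.ball_mem_nhds s₀ hδ] with s hs hsδ
    have hfs : IntervalIntegrable f volume s₀ s :=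
      hf.mono_set (uIcc_subset_uIcc hmem (Icc_subset_uIcc hs))
    have hle : ∀ u ∈ uIoc s₀ s, ‖⟪f u, g u⟫‖ ≤ ‖f u‖ * (K * |s - s₀|) := fun u hu => by
      have hus : |u - s₀| ≤ |s - s₀| := abs_sub_left_of_mem_uIcc (uIoc_subset_uIcc hu)
      have hgu : ‖g u‖ ≤ K * |s - s₀| :=
        (hgδ (lt_of_le_of_lt hus (by simpa [Real.dist_eq] using hsδ))).trans
          (mul_le_mul_of_nonneg_left hus hK)
      exact (norm_inner_le_norm _ _).trans (mul_le_mul_of_nonneg_left hgu (norm_nonneg _))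
    calc ‖∫ u in s₀..s, ⟪f u, g u⟫‖ ≤ |∫ u in s₀..s, ‖f u‖ * (K * |s - s₀|)| :=
          intervalIntegral.norm_integral_le_abs_of_norm_le
            ((ae_restrict_iff' measurableSet_uIoc).2 (ae_of_all _ hle)) (hfs.norm.mul_const _)
      _ = K * ‖(∫ u in s₀..s, ‖f u‖) * (s - s₀)‖ := by
          rw [intervalIntegral.integral_mul_const, Real.norm_eq_abs, abs_mul, abs_mul, abs_mul,
            abs_abs, abs_of_nonneg hK]
          ring
  refine hbound.trans_isLittleO ?_
  simpa using ((isLittleO_one_iff ℝ).2 hρ).mul_isBigO (isBigO_refl (· - s₀) (𝓝 s₀))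

theorem inner_sub_integral_inner_sub_eq [CompleteSpace E] {w : ℝ → E}
    (hf : IntervalIntegrable f volume a b) (hp : ∀ s ∈ Icc a b, p s = p a + ∫ u in a..s, f u)
    (hfw : IntervalIntegrable (fun u => ⟪f u, w u⟫) volume a b) {s₀ s : ℝ} (hs₀ : s₀ ∈ Icc a b)
    (hs : s ∈ Icc a b) :
    (⟪p s, w s⟫ - ∫ u in a..s, ⟪f u, w u⟫) - (⟪p s₀, w s₀⟫ - ∫ u in a..s₀, ⟪f u, w u⟫)
      = ⟪p s₀, w s - w s₀⟫ + (⟪p s - p s₀, w s - w s₀⟫ - ∫ u in s₀..s, ⟪f u, w u - w s₀⟫) := by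
  have hf' : IntervalIntegrable f volume s₀ s :=
    hf.mono_set (uIcc_subset_uIcc (Icc_subset_uIcc hs₀) (Icc_subset_uIcc hs))
  have hfw' : ∀ {c d}, c ∈ Icc a b → d ∈ Icc a b →
      IntervalIntegrable (fun u => ⟪f u, w u⟫) volume c d := fun hc hd =>
    hfw.mono_set (uIcc_subset_uIcc (Icc_subset_uIcc hc) (Icc_subset_uIcc hd))
  have ha : a ∈ Icc a b := left_mem_Icc.2 (hs₀.1.trans hs₀.2)
  have hconst : ∫ u in s₀..s, ⟪f u, w s₀⟫ = ⟪p s - p s₀, w s₀⟫ := by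
    have := (innerSL ℝ (w s₀)).intervalIntegral_comp_comm hf'
    simp only [innerSL_apply_apply] at this
    rw [sub_eq_integral_of_eq_add_integral hf hp hs₀ hs, real_inner_comm, ← this]
    simp only [real_inner_comm]
  have hsplit : ∫ u in s₀..s, ⟪f u, w u - w s₀⟫
      = (∫ u in a..s, ⟪f u, w u⟫) - (∫ u in a..s₀, ⟪f u, w u⟫) - ⟪p s - p s₀, w s₀⟫ := by
    rw [← hconst, intervalIntegral.integral_interval_sub_left (hfw' ha hs) (hfw' ha hs₀),
      ← intervalIntegral.integral_sub (hfw' hs₀ hs) ⟨hf'.1.inner_const _, hf'.2.inner_const _⟩]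
    simp only [inner_sub_right]
  rw [hsplit]
  simp only [inner_sub_left, inner_sub_right]
  ring

theorem hasDerivAt_inner_sub_integral_inner [CompleteSpace E] {w : ℝ → E} {w' : E} {s₀ : ℝ}
    (hf : IntervalIntegrable f volume a b) (hp : ∀ s ∈ Icc a b, p s = p a + ∫ u in a..s, f u)
    (hfw : IntervalIntegrable (fun u => ⟪f u, w u⟫) volume a b) (hs₀ : s₀ ∈ Ioo a b)
    (hw : HasDerivAt w w' s₀) :
    HasDerivAt (fun s => ⟪p s, w s⟫ - ∫ u in a..s, ⟪f u, w u⟫) ⟪p s₀, w'⟫ s₀ := by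
  have hIcc : Icc a b ∈ 𝓝 s₀ := Icc_mem_nhds hs₀.1 hs₀.2
  have hpc : ContinuousAt p s₀ := (continuousOn_of_eq_add_integral hf hp).continuousAt hIcc
  have hlin : HasDerivAt (fun s => ⟪p s₀, w s - w s₀⟫) ⟪p s₀, w'⟫ s₀ := by
    simpa using (hasDerivAt_const s₀ (p s₀)).inner ℝ (hw.sub_const (w s₀))
  have hR₁ : (fun s => ⟪p s - p s₀, w s - w s₀⟫) =o[𝓝 s₀] (· - s₀) := by
    have hprod := ((isLittleO_one_iff ℝ).2 (tendsto_sub_nhds_zero_iff.2 hpc)).norm_left.mul_isBigO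
      hw.isBigO_sub.norm_left
    simp only [one_mul] at hprod
    exact (isBigO_of_le _ fun s =>
      (norm_inner_le_norm (𝕜 := ℝ) _ _).trans (Real.le_norm_self _)).trans_isLittleO hprod
  have hR : HasDerivAt
      (fun s => ⟪p s - p s₀, w s - w s₀⟫ - ∫ u in s₀..s, ⟪f u, w u - w s₀⟫) 0 s₀ := by
    rw [hasDerivAt_iff_isLittleO]
    simpa using hR₁.sub (isLittleO_integral_inner_of_isBigO hf hs₀ hw.isBigO_sub)
  refine (((hlin.add hR).const_add (⟪p s₀, w s₀⟫ - ∫ u in a..s₀, ⟪f u, w u⟫)).congr_of_eventuallyEq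
    ?_).congr_deriv (add_zero _)
  filter_upwards [hIcc] with s hs using
    eq_add_of_sub_eq' (inner_sub_integral_inner_sub_eq hf hp hfw (Ioo_subset_Icc_self hs₀) hs)

theorem inner_sub_inner_le_integral_of_ae_le [CompleteSpace E] {w w' : ℝ → E} {φ : ℝ → ℝ}
    (hab : a ≤ b) (hf : IntervalIntegrable f volume a b)
    (hp : ∀ s ∈ Icc a b, p s = p a + ∫ u in a..s, f u) (hwc : ContinuousOn w (Icc a b))
    (hw : ∀ s ∈ Ioo a b, HasDerivAt w (w' s) s) (hφ : IntegrableOn φ (Icc a b))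
    (hle : ∀ᵐ s, s ∈ Ioo a b → ⟪f s, w s⟫ + ⟪p s, w' s⟫ ≤ φ s) :
    ⟪p b, w b⟫ - ⟪p a, w a⟫ ≤ ∫ s in a..b, φ s := by
  have hfw : IntegrableOn (fun u => ⟪f u, w u⟫) (Icc a b) :=
    IntegrableOn.inner_continuousOn ((intervalIntegrable_iff_integrableOn_Icc_of_le hab).1 hf) hwc
      isCompact_Icc
  have hfw' : IntervalIntegrable (fun u => ⟪f u, w u⟫) volume a b :=
    (intervalIntegrable_iff_integrableOn_Icc_of_le hab).2 hfw
  have hG := sub_le_integral_of_hasDerivAt_of_ae_le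
    (g := fun s => ⟪p s, w s⟫ - ∫ u in a..s, ⟪f u, w u⟫) (φ := fun s => φ s - ⟪f s, w s⟫) hab
    (((continuousOn_of_eq_add_integral hf hp).inner hwc).sub
      ((intervalIntegral.continuousOn_primitive_interval' hfw' left_mem_uIcc).mono Icc_subset_uIcc))
    (fun s hs => hasDerivAt_inner_sub_integral_inner hf hp hfw' hs (hw s hs)) (hφ.sub hfw)
    (by filter_upwards [hle] with s hs hs' using le_sub_iff_add_le'.2 (hs hs'))
  rw [intervalIntegral.integral_sub ((intervalIntegrable_iff_integrableOn_Icc_of_le hab).2 hφ) hfw',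
    intervalIntegral.integral_same, sub_zero] at hG
  linarith

end Primitive

end Calculus

theorem ham_smul (F : EuclideanSpace ℝ (Fin n) → Set (EuclideanSpace ℝ (Fin n)))
    (x p : EuclideanSpace ℝ (Fin n)) {r : ℝ} (hr : 0 ≤ r) :
    ham F x (r • p) = r * ham F x p := by
  have himage : (fun v => ⟪-v, r • p⟫) '' F x = r • ((fun v => ⟪-v, p⟫) '' F x) := by
    rw [← image_smul, image_image]
    simp only [real_inner_smul_right, smul_eq_mul]
  rw [ham, himage, Real.sSup_smul_of_nonneg hr, smul_eq_mul, ham]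

theorem ham_eq_inner_of_hasGradientAt
    {F : EuclideanSpace ℝ (Fin n) → Set (EuclideanSpace ℝ (Fin n))}
    {x p g : EuclideanSpace ℝ (Fin n)} (hg : HasGradientAt (fun q => ham F x q) g p) :
    ham F x p = ⟪g, p⟫ :=
  ((hasGradientAt_iff_hasFDerivAt.1 hg).apply_self_of_pos_homogeneous
    fun _ hr => ham_smul F x p hr.le).symm

theorem key_estimate_propagation_general
    (F : EuclideanSpace ℝ (Fin n) → Set (EuclideanSpace ℝ (Fin n)))
    (Hp : EuclideanSpace ℝ (Fin n) → EuclideanSpace ℝ (Fin n) → EuclideanSpace ℝ (Fin n))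
    (hgrad : ∀ x p : EuclideanSpace ℝ (Fin n), p ≠ 0 →
      HasGradientAt (fun q => ham F x q) (Hp x p) p)
    (S : Set (EuclideanSpace ℝ (Fin n))) (c₂ : ℝ)
    (hsc : ∀ x ∈ S, ∀ y ∈ S, ∀ p ζ : EuclideanSpace ℝ (Fin n),
      ζ ∈ frechetSubdiff (fun z => ham F z p) x →
        ham F y p - ham F x p - ⟪ζ, y - x⟫ ≥ c₂ * ‖p‖ * ‖y - x‖ ^ 2)
    (t : ℝ) (ht : 0 < t) (h : EuclideanSpace ℝ (Fin n))
    (xbar xh pbar pbar' : ℝ → EuclideanSpace ℝ (Fin n))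
    (hpne : ∀ s ∈ Icc (0 : ℝ) t, pbar s ≠ 0)
    (hxbarS : ∀ s ∈ Icc (0 : ℝ) t, xbar s ∈ S)
    (hxhS : ∀ s ∈ Icc (0 : ℝ) t, xh s ∈ S)
    (hxbar : ∀ s ∈ Icc (0 : ℝ) t, HasDerivAt xbar (-(Hp (xbar s) (pbar s))) s)
    (hxh : ∀ s ∈ Icc (0 : ℝ) t, HasDerivAt xh (-(Hp (xh s) (pbar s))) s)
    (hterm : xh t = xbar t + h)
    (hpint : IntervalIntegrable pbar' volume 0 t)
    (hprep : ∀ s ∈ Icc (0 : ℝ) t, pbar s = pbar 0 + ∫ u in (0 : ℝ)..s, pbar' u)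
    (hpinc : ∀ᵐ s ∂volume, s ∈ Icc (0 : ℝ) t →
      pbar' s ∈ frechetSubdiff (fun z => ham F z (pbar s)) (xbar s)) :
    ⟪pbar 0, xh 0 - xbar 0⟫ - ⟪pbar t, h⟫ ≥
      c₂ * ∫ s in (0 : ℝ)..t, ‖pbar s‖ * ‖xh s - xbar s‖ ^ 2 := by
  set w := fun s => xh s - xbar s
  have hw : ∀ s ∈ Icc (0 : ℝ) t,
      HasDerivAt w (Hp (xbar s) (pbar s) - Hp (xh s) (pbar s)) s := fun s hs =>
    ((hxh s hs).sub (hxbar s hs)).congr_deriv (neg_sub_neg _ _)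
  have hwc : ContinuousOn w (Icc 0 t) := fun s hs => (hw s hs).continuousAt.continuousWithinAt
  have hφ : IntegrableOn (fun s => -(c₂ * (‖pbar s‖ * ‖w s‖ ^ 2))) (Icc 0 t) :=
    ((((continuousOn_of_eq_add_integral hpint hprep).norm.mul (hwc.norm.pow 2)).const_smul c₂).neg
      ).integrableOn_Icc
  have hle : ∀ᵐ s, s ∈ Ioo 0 t →
      ⟪pbar' s, w s⟫ + ⟪pbar s, Hp (xbar s) (pbar s) - Hp (xh s) (pbar s)⟫
        ≤ -(c₂ * (‖pbar s‖ * ‖w s‖ ^ 2)) := by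
    filter_upwards [hpinc] with s hsub hs
    have hs' := Ioo_subset_Icc_self hs
    have hsemi : ham F (xh s) (pbar s) - ham F (xbar s) (pbar s) - ⟪pbar' s, w s⟫
        ≥ c₂ * ‖pbar s‖ * ‖w s‖ ^ 2 := hsc _ (hxbarS s hs') _ (hxhS s hs') _ _ (hsub hs')
    have heuler : ⟪pbar s, Hp (xbar s) (pbar s) - Hp (xh s) (pbar s)⟫
        = ham F (xbar s) (pbar s) - ham F (xh s) (pbar s) := by
      rw [inner_sub_right, real_inner_comm, real_inner_comm (Hp _ _),
        ← ham_eq_inner_of_hasGradientAt (hgrad _ _ (hpne s hs')),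
        ← ham_eq_inner_of_hasGradientAt (hgrad _ _ (hpne s hs'))]
    linarith
  have key := inner_sub_inner_le_integral_of_ae_le ht.le hpint hprep hwc
    (fun s hs => hw s (Ioo_subset_Icc_self hs)) hφ hle
  rw [intervalIntegral.integral_neg, intervalIntegral.integral_const_mul] at key
  simp only [w, hterm, add_sub_cancel_left] at key
  linarith

/-- Key estimate in the propagation of proximal subgradients: if `x̄` and `x_h` solve
`-ẋ(s) = ∇_pH(x(s), p̄(s))` on `[0,t]` with terminal conditions `x̄(t)` and `x̄(t)+h`,
`p̄` is an absolutely continuous dual arc with `ṗ̄(s) ∈ ∂ₓ⁻H(x̄(s), p̄(s))` a.e., and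
`H(·,p)` is semiconvex (subgradient inequality with constant `c₂‖p‖`) on a set `S`
containing the trajectories, then
`⟨p̄(0), x_h(0) − x̄(0)⟩ − ⟨p̄(t), h⟩ ≥ c₂ ∫₀ᵗ ‖p̄(s)‖ ‖x_h(s) − x̄(s)‖² ds`. -/
theorem key_estimate_propagation
    (F : EuclideanSpace ℝ (Fin n) → Set (EuclideanSpace ℝ (Fin n)))
    (hne : ∀ x, (F x).Nonempty) (hcpt : ∀ x, IsCompact (F x))
    (Hp : EuclideanSpace ℝ (Fin n) → EuclideanSpace ℝ (Fin n) → EuclideanSpace ℝ (Fin n))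
    (hgrad : ∀ x p : EuclideanSpace ℝ (Fin n), p ≠ 0 →
      HasGradientAt (fun q => ham F x q) (Hp x p) p)
    (S : Set (EuclideanSpace ℝ (Fin n))) (c₂ : ℝ)
    (hsc : ∀ x ∈ S, ∀ y ∈ S, ∀ p ζ : EuclideanSpace ℝ (Fin n),
      ζ ∈ frechetSubdiff (fun z => ham F z p) x →
        ham F y p - ham F x p - ⟪ζ, y - x⟫ ≥ c₂ * ‖p‖ * ‖y - x‖ ^ 2)
    (t : ℝ) (ht : 0 < t) (h : EuclideanSpace ℝ (Fin n))
    (xbar xh pbar pbar' : ℝ → EuclideanSpace ℝ (Fin n))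
    (hpne : ∀ s ∈ Icc (0 : ℝ) t, pbar s ≠ 0)
    (hxbarS : ∀ s ∈ Icc (0 : ℝ) t, xbar s ∈ S)
    (hxhS : ∀ s ∈ Icc (0 : ℝ) t, xh s ∈ S)
    (hxbar : ∀ s ∈ Icc (0 : ℝ) t, HasDerivAt xbar (-(Hp (xbar s) (pbar s))) s)
    (hxh : ∀ s ∈ Icc (0 : ℝ) t, HasDerivAt xh (-(Hp (xh s) (pbar s))) s)
    (hterm : xh t = xbar t + h)
    (hpint : IntervalIntegrable pbar' volume 0 t)
    (hprep : ∀ s ∈ Icc (0 : ℝ) t, pbar s = pbar 0 + ∫ u in (0 : ℝ)..s, pbar' u)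
    (hpinc : ∀ᵐ s ∂volume, s ∈ Icc (0 : ℝ) t →
      pbar' s ∈ frechetSubdiff (fun z => ham F z (pbar s)) (xbar s)) :
    ⟪pbar 0, xh 0 - xbar 0⟫ - ⟪pbar t, h⟫ ≥
      c₂ * ∫ s in (0 : ℝ)..t, ‖pbar s‖ * ‖xh s - xbar s‖ ^ 2 :=
  key_estimate_propagation_general F Hp hgrad S c₂ hsc t ht h xbar xh pbar pbar' hpne hxbarS hxhS
    hxbar hxh hterm hpint hprep hpinc
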